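/- In the universal enveloping superalgebra of osp(1|2) (generators as above), the two-tensor r₂ = h⊗e₊ - e₊⊗h - 2 v₊⊗v₊ satisfies the graded classical Yang–Baxter equation [r¹², r¹³] + [r¹², r²³] + [r¹³, r²³] = 0. -/
import Mathlib

section helpers
variable {T : Type*} [Ring T]

lemma swap_comm {x y : T} (hxy : x * y = y * x) (z : T) :
    x * (y * z) = y * (x * z) := by rw [← mul_assoc, hxy, mul_assoc]

lemma swap_acomm {x y : T} (hxy : x * y = -(y * x)) (z : T) :
    x * (y * z) = -(y * (x * z)) := by rw [← mul_assoc, hxy, neg_mul, mul_assoc]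

variable [Algebra ℚ T] in
lemma swap_hv {x y : T} (q : ℚ) (hxy : x * y = y * x - q • x) (z : T) :
    x * (y * z) = y * (x * z) - q • (x * z) := by
  rw [← mul_assoc, hxy, sub_mul, smul_mul_assoc, mul_assoc]
end helpers

/-- Graded CYBE for the extended Jordanian r-matrix
`r₂ = h ⊗ e₊ - e₊ ⊗ h - 2 v₊ ⊗ v₊` of `osp(1|2)`.  The ring `T` models the graded
triple tensor product `U(osp(1|2))⊗³` with Koszul signs; `h s`, `v s` are the images
of the even generator `h` and the odd generator `v₊` in slot `s`, and
`e s = 4 v₊²` is the image of `e₊`.  Since `r₂` is even, the brackets in the CYBE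
are ordinary commutators. -/
theorem osp12_extended_jordanian_cybe {T : Type*} [Ring T] [Algebra ℚ T]
    (h v e : Fin 3 → T)
    (hv : ∀ s, h s * v s - v s * h s = (1/2 : ℚ) • v s)
    (he : ∀ s, e s = (4 : ℚ) • (v s * v s))
    (chh : ∀ s t, s ≠ t → h s * h t = h t * h s)
    (chv : ∀ s t, s ≠ t → h s * v t = v t * h s)
    (cvv : ∀ s t, s ≠ t → v s * v t = -(v t * v s))
    (r : Fin 3 → Fin 3 → T)
    (hr : ∀ i j, r i j = h i * e j - e i * h j - (2 : ℚ) • (v i * v j)) :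
    (r 0 1 * r 0 2 - r 0 2 * r 0 1) + (r 0 1 * r 1 2 - r 1 2 * r 0 1)
      + (r 0 2 * r 1 2 - r 1 2 * r 0 2) = 0 := by
  -- binary reordering rules
  have vh : ∀ s, v s * h s = h s * v s - (1/2 : ℚ) • v s := by
    intro s
    rw [eq_sub_iff_add_eq, ← hv s]
    abel
  have rA : ∀ z, v 0 * (h 0 * z) = h 0 * (v 0 * z) - (1/2 : ℚ) • (v 0 * z) :=
    swap_hv _ (vh 0)
  have rB : ∀ z, v 1 * (h 1 * z) = h 1 * (v 1 * z) - (1/2 : ℚ) • (v 1 * z) :=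
    swap_hv _ (vh 1)
  have rC : ∀ z, v 2 * (h 2 * z) = h 2 * (v 2 * z) - (1/2 : ℚ) • (v 2 * z) :=
    swap_hv _ (vh 2)
  have cH10 : h 1 * h 0 = h 0 * h 1 := chh 1 0 (by decide)
  have cH20 : h 2 * h 0 = h 0 * h 2 := chh 2 0 (by decide)
  have cH21 : h 2 * h 1 = h 1 * h 2 := chh 2 1 (by decide)
  have cHA1 : h 1 * v 0 = v 0 * h 1 := chv 1 0 (by decide)
  have cHA2 : h 2 * v 0 = v 0 * h 2 := chv 2 0 (by decide)
  have cHB2 : h 2 * v 1 = v 1 * h 2 := chv 2 1 (by decide)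
  have cBH0 : v 1 * h 0 = h 0 * v 1 := (chv 0 1 (by decide)).symm
  have cCH0 : v 2 * h 0 = h 0 * v 2 := (chv 0 2 (by decide)).symm
  have cCH1 : v 2 * h 1 = h 1 * v 2 := (chv 1 2 (by decide)).symm
  have aBA : v 1 * v 0 = -(v 0 * v 1) := cvv 1 0 (by decide)
  have aCA : v 2 * v 0 = -(v 0 * v 2) := cvv 2 0 (by decide)
  have aCB : v 2 * v 1 = -(v 1 * v 2) := cvv 2 1 (by decide)
  simp only [hr, he, mul_add, add_mul, mul_sub, sub_mul, smul_mul_assoc,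
    mul_smul_comm, smul_smul, mul_assoc, neg_mul, mul_neg, smul_neg, neg_neg,
    smul_sub, smul_add,
    vh 0, vh 1, vh 2, rA, rB, rC,
    cH10, cH20, cH21, cHA1, cHA2, cHB2, cBH0, cCH0, cCH1, aBA, aCA, aCB,
    swap_comm cH10, swap_comm cH20, swap_comm cH21,
    swap_comm cHA1, swap_comm cHA2, swap_comm cHB2,
    swap_comm cBH0, swap_comm cCH0, swap_comm cCH1,
    swap_acomm aBA, swap_acomm aCA, swap_acomm aCB]
  module
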